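/- Define F: ℂ³ → ℝ × ℂ by F(z₁,z₂,z₃) = (a, b), where 2a = |z₁|² − |z₂|², and b = z₃ if a = 0 and z₁ = z₂ = 0; b = z₃ + conj(z₁)conj(z₂)/|z₁| if a ≥ 0 and z₁ ≠ 0; and b = z₃ + conj(z₁)conj(z₂)/|z₂| if a < 0. Then: (i) F is well-defined, continuous, and surjective; (ii) at every point z ∈ ℂ³ with |z₁| ≠ |z₂|, F is differentiable at z, its (real) derivative dF_z: ℂ³ → ℝ × ℂ ≅ ℝ³ is surjective, and the 3-dimensional kernel ker(dF_z) is a special Lagrangian 3-plane (ω and Im Ω vanish on it). Hence F is a piecewise-smooth special Lagrangian fibration of ℂ³, whose fibres F^{-1}(a,b) with a ≠ 0 are nonsingular special Lagrangian 3-folds. -/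

import Mathlib

open scoped BigOperators ComplexConjugate

noncomputable section

/-- The Kähler form on `ℂ³`. -/
def wC (u v : Fin 3 → ℂ) : ℝ := (∑ j, conj (u j) * v j).im

/-- The holomorphic volume form `Ω = dz₁∧dz₂∧dz₃` on `ℂ³`. -/
def OmC (v : Fin 3 → (Fin 3 → ℂ)) : ℂ :=
  Matrix.det (Matrix.of fun i j => v j i)

/-- `a(z) = (|z₁|² − |z₂|²)/2`. -/
def aval (z : Fin 3 → ℂ) : ℝ := (Complex.normSq (z 0) - Complex.normSq (z 1)) / 2

open Classical in
/-- The piecewise-smooth special Lagrangian fibration `F : ℂ³ → ℝ × ℂ` of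
equation (11.2): `F(z) = (a, b)` with `2a = |z₁|²−|z₂|²`, `b = z₃` if
`a = 0, z₁ = z₂ = 0`; `b = z₃ + conj z₁ conj z₂/|z₁|` if `a ≥ 0, z₁ ≠ 0`; and
`b = z₃ + conj z₁ conj z₂/|z₂|` if `a < 0`. -/
def F17 (z : Fin 3 → ℂ) : ℝ × ℂ :=
  (aval z,
    if aval z = 0 ∧ z 0 = 0 ∧ z 1 = 0 then z 2
    else if 0 ≤ aval z ∧ z 0 ≠ 0 then
      z 2 + conj (z 0) * conj (z 1) / ((‖z 0‖ : ℝ) : ℂ)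
    else z 2 + conj (z 0) * conj (z 1) / ((‖z 1‖ : ℝ) : ℂ))

/-! ### Auxiliary material -/

section Aux

/-- Auxiliary form of the second component of `F17`. -/
def bfun (z : Fin 3 → ℂ) : ℂ :=
  if z 0 = 0 ∧ z 1 = 0 then 0
  else conj (z 0) * conj (z 1) / ((max (‖z 0‖) (‖z 1‖) : ℝ) : ℂ)

lemma abs_le_abs_of_normSq {u v : ℂ} (h : Complex.normSq u ≤ Complex.normSq v) :
    ‖u‖ ≤ ‖v‖ := by
  rw [Complex.norm_def, Complex.norm_def]
  exact Real.sqrt_le_sqrt h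

lemma F17_eq (z : Fin 3 → ℂ) : F17 z = (aval z, z 2 + bfun z) := by
  classical
  unfold F17 bfun
  by_cases h1 : aval z = 0 ∧ z 0 = 0 ∧ z 1 = 0
  · rw [if_pos h1, if_pos ⟨h1.2.1, h1.2.2⟩]
    simp
  · rw [if_neg h1]
    by_cases h2 : 0 ≤ aval z ∧ z 0 ≠ 0
    · have hle : ‖z 1‖ ≤ ‖z 0‖ := by
        apply abs_le_abs_of_normSq
        have := h2.1
        unfold aval at this
        linarith
      rw [if_pos h2, if_neg (fun hc : z 0 = 0 ∧ z 1 = 0 => h2.2 hc.1), max_eq_left hle]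
    · rw [if_neg h2]
      push_neg at h2
      by_cases h3 : 0 ≤ aval z
      · exfalso
        have h0 : z 0 = 0 := h2 h3
        have hn0 : Complex.normSq (z 0) = 0 := by simp [h0]
        have : aval z ≤ 0 := by
          unfold aval
          have := Complex.normSq_nonneg (z 1)
          linarith
        have ha0 : aval z = 0 := le_antisymm this h3
        have hn1 : Complex.normSq (z 1) = 0 := by
          unfold aval at ha0
          linarith
        exact h1 ⟨ha0, h0, Complex.normSq_eq_zero.mp hn1⟩
      · push_neg at h3
        have hlt : ‖z 0‖ ≤ ‖z 1‖ := by
          apply abs_le_abs_of_normSq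
          unfold aval at h3
          linarith
        have hz1 : ¬(z 0 = 0 ∧ z 1 = 0) := by
          rintro ⟨ha, hb⟩
          unfold aval at h3
          simp [ha, hb] at h3
        rw [if_neg hz1, max_eq_right hlt]

lemma bfun_norm_le (w : Fin 3 → ℂ) : ‖bfun w‖ ≤ ‖w 0‖ := by
  unfold bfun
  split_ifs with h
  · simp
  · have hmax : 0 < max (‖w 0‖) (‖w 1‖) := by
      rcases not_and_or.mp h with h' | h'
      · exact lt_max_of_lt_left (by simpa using h')
      · exact lt_max_of_lt_right (by simpa using h')
    rw [norm_div, norm_mul]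
    simp only [Complex.norm_conj, Complex.norm_real, Real.norm_eq_abs, abs_of_pos hmax]
    rw [div_le_iff₀ hmax]
    calc ‖w 0‖ * ‖w 1‖
        ≤ ‖w 0‖ * max (‖w 0‖) (‖w 1‖) := by
          apply mul_le_mul_of_nonneg_left (le_max_right _ _) (norm_nonneg _)

lemma continuous_bfun : Continuous bfun := by
  rw [continuous_iff_continuousAt]
  intro z
  by_cases h : z 0 = 0 ∧ z 1 = 0
  · have h0 : bfun z = 0 := by unfold bfun; rw [if_pos h]
    unfold ContinuousAt
    rw [h0]
    apply squeeze_zero_norm bfun_norm_le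
    have : Filter.Tendsto (fun w : Fin 3 → ℂ => ‖w 0‖) (nhds z)
        (nhds (‖z 0‖)) :=
      (continuous_norm.comp (continuous_apply 0)).continuousAt
    simpa [h.1] using this
  · have hU : IsOpen {w : Fin 3 → ℂ | ¬(w 0 = 0 ∧ w 1 = 0)} := by
      have : IsClosed {w : Fin 3 → ℂ | w 0 = 0 ∧ w 1 = 0} :=
        ((isClosed_eq (continuous_apply 0) continuous_const).inter
          (isClosed_eq (continuous_apply 1) continuous_const))
      exact this.isOpen_compl
    have hmax : 0 < max (‖z 0‖) (‖z 1‖) := by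
      rcases not_and_or.mp h with h' | h'
      · exact lt_max_of_lt_left (by simpa using h')
      · exact lt_max_of_lt_right (by simpa using h')
    have hg : ContinuousAt (fun w : Fin 3 → ℂ =>
        conj (w 0) * conj (w 1) / ((max (‖w 0‖) (‖w 1‖) : ℝ) : ℂ)) z := by
      apply ContinuousAt.div
      · exact ((Complex.continuous_conj.comp (continuous_apply 0)).mul
          (Complex.continuous_conj.comp (continuous_apply 1))).continuousAt
      · exact (Complex.continuous_ofReal.comp (((continuous_norm.comp
          (continuous_apply 0)).max (continuous_norm.comp
          (continuous_apply 1))))).continuousAt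
      · simpa using hmax.ne'
    apply hg.congr
    filter_upwards [hU.mem_nhds h] with w hw
    unfold bfun
    rw [if_neg hw]

lemma continuous_aval : Continuous aval :=
  ((Complex.continuous_normSq.comp (continuous_apply 0)).sub
    (Complex.continuous_normSq.comp (continuous_apply 1))).div_const 2

lemma continuous_F17 : Continuous F17 := by
  have : F17 = fun z => (aval z, z 2 + bfun z) := funext F17_eq
  rw [this]
  exact continuous_aval.prodMk ((continuous_apply 2).add continuous_bfun)

lemma surjective_F17 : Function.Surjective F17 := by
  classical
  rintro ⟨s, w⟩
  rcases lt_trichotomy s 0 with hs | hs | hs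
  · refine ⟨![0, ((Real.sqrt (-(2*s)) : ℝ) : ℂ), w], ?_⟩
    have h2s : (0:ℝ) ≤ -(2*s) := by linarith
    have hss : Real.sqrt (-(2*s)) * Real.sqrt (-(2*s)) = -(2*s) := Real.mul_self_sqrt h2s
    have hav : aval ![0, ((Real.sqrt (-(2*s)) : ℝ) : ℂ), w] = s := by
      simp only [aval, Matrix.cons_val_zero, Matrix.cons_val_one, Matrix.head_cons,
        Complex.normSq_ofReal, Complex.normSq_zero]
      rw [hss]; ring
    unfold F17
    rw [hav]
    rw [if_neg (by rintro ⟨h0, -, -⟩; exact hs.ne h0)]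
    rw [if_neg (by rintro ⟨h0, -⟩; exact absurd h0 (not_le.mpr hs))]
    simp
  · subst hs
    refine ⟨![0, 0, w], ?_⟩
    have hav : aval ![0, 0, w] = 0 := by simp [aval]
    unfold F17
    rw [if_pos ⟨hav, by simp, by simp⟩, hav]
    simp
  · refine ⟨![((Real.sqrt (2*s) : ℝ) : ℂ), 0, w], ?_⟩
    have h2s : (0:ℝ) ≤ 2*s := by linarith
    have hss : Real.sqrt (2*s) * Real.sqrt (2*s) = 2*s := Real.mul_self_sqrt h2s
    have hav : aval ![((Real.sqrt (2*s) : ℝ) : ℂ), 0, w] = s := by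
      simp only [aval, Matrix.cons_val_zero, Matrix.cons_val_one, Matrix.head_cons,
        Complex.normSq_ofReal, Complex.normSq_zero]
      rw [hss]; ring
    have hsne : ((Real.sqrt (2*s) : ℝ) : ℂ) ≠ 0 := by
      simp only [ne_eq, Complex.ofReal_eq_zero]
      exact (Real.sqrt_pos.mpr (by linarith)).ne'
    unfold F17
    rw [hav]
    rw [if_neg (by rintro ⟨h0, -, -⟩; exact hs.ne' h0)]
    rw [if_pos ⟨hs.le, by simpa using hsne⟩]
    simp

/-- The candidate derivative of `F17` at `z`, valid where `|z c|` is the larger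
modulus (`c = 0` or `c = 1`). -/
def LD (c : Fin 3) (z : Fin 3 → ℂ) : (Fin 3 → ℂ) →ₗ[ℝ] ℝ × ℂ where
  toFun v := ((conj (z 0) * v 0).re - (conj (z 1) * v 1).re,
    v 2 + ((conj (v 0) * conj (z 1) + conj (z 0) * conj (v 1)) * (‖z c‖ : ℂ)^2
      - conj (z 0) * conj (z 1) * (((conj (z c) * v c).re : ℝ) : ℂ)) / (‖z c‖ : ℂ)^3)
  map_add' u v := by
    refine Prod.ext ?_ ?_ <;>
      simp only [Pi.add_apply, mul_add, map_add, Complex.add_re, Complex.ofReal_add,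
        Prod.fst_add, Prod.snd_add]
    · ring
    · field_simp
      ring
  map_smul' a v := by
    refine Prod.ext ?_ ?_ <;>
      simp only [Pi.smul_apply, Complex.real_smul, RingHom.id_apply, Prod.smul_fst,
        Prod.smul_snd, smul_eq_mul, map_mul, Complex.conj_ofReal]
    · simp only [Complex.mul_re, Complex.mul_im, Complex.ofReal_re, Complex.ofReal_im]
      ring
    · simp only [Complex.mul_re, Complex.mul_im, Complex.ofReal_re, Complex.ofReal_im,
        Complex.ofReal_mul]
      field_simp
      push_cast
      ring

lemma LD_apply (c : Fin 3) (z v : Fin 3 → ℂ) :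
    LD c z v = ((conj (z 0) * v 0).re - (conj (z 1) * v 1).re,
    v 2 + ((conj (v 0) * conj (z 1) + conj (z 0) * conj (v 1)) * (‖z c‖ : ℂ)^2
      - conj (z 0) * conj (z 1) * (((conj (z c) * v c).re : ℝ) : ℂ)) / (‖z c‖ : ℂ)^3) :=
  rfl

lemma hasFDerivAt_LD (c : Fin 3) (z : Fin 3 → ℂ) (h : z c ≠ 0) :
    HasFDerivAt (fun w => (aval w, w 2 + conj (w 0) * conj (w 1) / (‖w c‖ : ℂ)))
      (LinearMap.toContinuousLinearMap (LD c z)) z := by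
  have hns : Complex.normSq (z c) ≠ 0 := by
    simpa [Complex.normSq_eq_zero] using h
  have hsq : Real.sqrt (Complex.normSq (z c)) ≠ 0 := by
    rw [← Complex.norm_def]
    simpa using h
  have habsne : ‖z c‖ ≠ 0 := by simpa using h
  set π : Fin 3 → ((Fin 3 → ℂ) →L[ℝ] ℂ) := fun j => ContinuousLinearMap.proj j with hπ
  have hre : ∀ j, HasFDerivAt (fun w : Fin 3 → ℂ => (w j).re) (Complex.reCLM.comp (π j)) z :=
    fun j => (Complex.reCLM.comp (π j)).hasFDerivAt
  have him : ∀ j, HasFDerivAt (fun w : Fin 3 → ℂ => (w j).im) (Complex.imCLM.comp (π j)) z :=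
    fun j => (Complex.imCLM.comp (π j)).hasFDerivAt
  have hconj : ∀ j, HasFDerivAt (fun w : Fin 3 → ℂ => conj (w j))
      ((Complex.conjCLE.toContinuousLinearMap).comp (π j)) z :=
    fun j => ((Complex.conjCLE.toContinuousLinearMap).comp (π j)).hasFDerivAt
  have hnsq : ∀ j, HasFDerivAt (fun w : Fin 3 → ℂ => Complex.normSq (w j))
      (((z j).re • (Complex.reCLM.comp (π j)) + (z j).re • (Complex.reCLM.comp (π j))) +
       ((z j).im • (Complex.imCLM.comp (π j)) + (z j).im • (Complex.imCLM.comp (π j)))) z := by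
    intro j
    have := ((hre j).mul (hre j)).add ((him j).mul (him j))
    exact this.congr_of_eventuallyEq
      (Filter.Eventually.of_forall fun w => Complex.normSq_apply (w j))
  have hA := ((hnsq 0).sub (hnsq 1)).const_smul ((1:ℝ)/2)
  have hsqrt := (Real.hasDerivAt_sqrt hns).comp_hasFDerivAt z (hnsq c)
  have hinv := (hasDerivAt_inv hsq).comp_hasFDerivAt z hsqrt
  have hinvC := Complex.ofRealCLM.hasFDerivAt.comp z hinv
  have hb2 := ((hconj 0).mul (hconj 1)).mul hinvC
  have hb := ((π 2).hasFDerivAt).add hb2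
  have hfull := hA.prodMk hb
  have hev : (fun w : Fin 3 → ℂ => (aval w, w 2 + conj (w 0) * conj (w 1) / (‖w c‖ : ℂ)))
      =ᶠ[nhds z] (fun w => (((1:ℝ)/2) • (Complex.normSq (w 0) - Complex.normSq (w 1)),
        (π 2) w + (conj (w 0) * conj (w 1)) *
          Complex.ofRealCLM ((Inv.inv ∘ (Real.sqrt ∘ fun w : Fin 3 → ℂ => Complex.normSq (w c))) w))) := by
    refine Filter.Eventually.of_forall fun w => ?_
    refine Prod.ext ?_ ?_
    · simp [aval, smul_eq_mul]
      ring
    · simp [hπ, Function.comp, Complex.norm_def, div_eq_mul_inv, Complex.ofReal_inv]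
  refine (hfull.congr_of_eventuallyEq hev).congr_fderiv ?_
  apply ContinuousLinearMap.ext
  intro v
  refine Prod.ext ?_ ?_
  · simp only [hπ, ContinuousLinearMap.prod_apply, ContinuousLinearMap.coe_comp',
      ContinuousLinearMap.add_apply, ContinuousLinearMap.smul_apply,
      ContinuousLinearMap.coe_smul', Pi.smul_apply, Function.comp_apply,
      ContinuousLinearMap.proj_apply, Complex.reCLM_apply, Complex.imCLM_apply,
      LinearMap.coe_toContinuousLinearMap', LinearMap.coe_toContinuousLinearMap, LD,
      LinearMap.coe_mk, AddHom.coe_mk,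
      smul_eq_mul, ContinuousLinearMap.sub_apply]
    simp only [Complex.mul_re, Complex.conj_re, Complex.conj_im]
    ring
  · simp only [hπ, ContinuousLinearMap.prod_apply, ContinuousLinearMap.coe_comp',
      ContinuousLinearMap.add_apply, ContinuousLinearMap.smul_apply,
      ContinuousLinearMap.coe_smul', Pi.smul_apply, Function.comp_apply,
      ContinuousLinearMap.proj_apply, Complex.reCLM_apply, Complex.imCLM_apply,
      LinearMap.coe_toContinuousLinearMap', LinearMap.coe_toContinuousLinearMap, LD,
      LinearMap.coe_mk, AddHom.coe_mk,
      smul_eq_mul, ContinuousLinearMap.sub_apply, Complex.ofRealCLM_apply,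
      ContinuousLinearEquiv.coe_coe, Complex.conjCLE_apply, Complex.real_smul,
      Complex.ofReal_mul, Complex.ofReal_add, Complex.ofReal_inv, Complex.ofReal_div]
    have hsqC : ((Real.sqrt (Complex.normSq (z c)) : ℝ) : ℂ) ≠ 0 := Complex.ofReal_ne_zero.mpr hsq
    simp only [Complex.norm_def]
    push_cast
    field_simp
    simp only [Pi.mul_apply, Complex.mul_re, Complex.conj_re, Complex.conj_im]
    push_cast
    ring

/-- extraction of the certificate hypotheses from kernel membership. -/
lemma comps (c : Fin 3) (hc : c = 0 ∨ c = 1) (z : Fin 3 → ℂ) (hz : z c ≠ 0)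
    (p : Fin 3 → ℂ) (hp : LD c z p = 0) :
    (conj (z 0) * p 0 + z 0 * conj (p 0) - conj (z 1) * p 1 - z 1 * conj (p 1) = 0) ∧
    (2*((‖z c‖ : ℝ):ℂ)^3*(p 2) - (-2*((‖z c‖ : ℝ):ℂ)^2*(conj (p 0) * conj (z 1) + conj (z 0) * conj (p 1))
      + conj (z 0) * conj (z 1) * (conj (z c) * p c + z c * conj (p c))) = 0) ∧
    (2*((‖z c‖ : ℝ):ℂ)^3*conj (p 2) - (-2*((‖z c‖ : ℝ):ℂ)^2*(p 0 * z 1 + z 0 * p 1)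
      + z 0 * z 1 * (conj (z c) * p c + z c * conj (p c))) = 0) := by
  have habs : ‖z c‖ ≠ 0 := by simpa using hz
  have h3 : ((‖z c‖ : ℝ):ℂ)^3 ≠ 0 := by
    exact pow_ne_zero _ (Complex.ofReal_ne_zero.mpr habs)
  have hre : (conj (z 0) * p 0).re - (conj (z 1) * p 1).re = 0 := congrArg Prod.fst hp
  have hb : p 2 + ((conj (p 0) * conj (z 1) + conj (z 0) * conj (p 1)) * (‖z c‖ : ℂ)^2
      - conj (z 0) * conj (z 1) * (((conj (z c) * p c).re : ℝ) : ℂ)) / (‖z c‖ : ℂ)^3 = 0 :=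
    congrArg Prod.snd hp
  have e0 : conj (z 0) * p 0 + z 0 * conj (p 0) = 2*(((conj (z 0) * p 0).re : ℝ) : ℂ) := by
    have := Complex.add_conj (conj (z 0) * p 0)
    simp only [map_mul, Complex.conj_conj] at this
    push_cast at this
    exact this
  have e1 : conj (z 1) * p 1 + z 1 * conj (p 1) = 2*(((conj (z 1) * p 1).re : ℝ) : ℂ) := by
    have := Complex.add_conj (conj (z 1) * p 1)
    simp only [map_mul, Complex.conj_conj] at this
    push_cast at this
    exact this
  have ec : conj (z c) * p c + z c * conj (p c) = 2*(((conj (z c) * p c).re : ℝ) : ℂ) := by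
    rcases hc with h | h <;> subst h
    · exact e0
    · exact e1
  have hreC : (((conj (z 0) * p 0).re : ℝ) : ℂ) - (((conj (z 1) * p 1).re : ℝ) : ℂ) = 0 := by
    have := congrArg (fun t : ℝ => (t : ℂ)) hre
    push_cast at this
    simpa using this
  have hb' : (conj (p 0) * conj (z 1) + conj (z 0) * conj (p 1)) * (‖z c‖ : ℂ)^2
      - conj (z 0) * conj (z 1) * (((conj (z c) * p c).re : ℝ) : ℂ) = -(p 2) * (‖z c‖ : ℂ)^3 := by
    have h := eq_neg_of_add_eq_zero_right hb
    rw [div_eq_iff h3] at h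
    exact h
  have hp1 : conj (z 0) * p 0 + z 0 * conj (p 0) - conj (z 1) * p 1 - z 1 * conj (p 1) = 0 := by
    linear_combination e0 - e1 + 2*hreC
  have H2 : 2*((‖z c‖ : ℝ):ℂ)^3*(p 2) - (-2*((‖z c‖ : ℝ):ℂ)^2*(conj (p 0) * conj (z 1) + conj (z 0) * conj (p 1))
      + conj (z 0) * conj (z 1) * (conj (z c) * p c + z c * conj (p c))) = 0 := by
    linear_combination (2:ℂ)*hb' - (conj (z 0) * conj (z 1))*ec
  refine ⟨hp1, H2, ?_⟩
  have hcj := congrArg (starRingEnd ℂ) H2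
  simp only [map_sub, map_add, map_mul, map_neg, map_pow, map_zero, map_ofNat,
    Complex.conj_conj, Complex.conj_ofReal] at hcj
  linear_combination hcj

lemma LD_surj (c : Fin 3) (hc : c = 0 ∨ c = 1) (z : Fin 3 → ℂ) (hz : z c ≠ 0) :
    Function.Surjective ⇑(LD c z) := by
  rintro ⟨s, w⟩
  rcases hc with h | h <;> subst h
  · have hn : ((Complex.normSq (z 0) : ℝ) : ℂ) ≠ 0 :=
      Complex.ofReal_ne_zero.mpr (by simpa [Complex.normSq_eq_zero] using hz)
    have hkey : conj (z 0) * ((s:ℂ) * z 0 / ((Complex.normSq (z 0) : ℝ):ℂ)) = (s:ℂ) := by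
      rw [mul_div_assoc', div_eq_iff hn]
      linear_combination (s:ℂ) * Complex.mul_conj (z 0)
    refine ⟨![(s:ℂ) * z 0 / ((Complex.normSq (z 0) : ℝ):ℂ), 0,
      w - ((conj ((s:ℂ) * z 0 / ((Complex.normSq (z 0) : ℝ):ℂ)) * conj (z 1)
          + conj (z 0) * conj (0:ℂ)) * (‖z 0‖ : ℂ)^2
        - conj (z 0) * conj (z 1)
          * (((conj (z 0) * ((s:ℂ) * z 0 / ((Complex.normSq (z 0) : ℝ):ℂ))).re : ℝ) : ℂ))
          / (‖z 0‖ : ℂ)^3], ?_⟩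
    rw [LD_apply]
    refine Prod.ext ?_ ?_ <;>
      simp only [Matrix.cons_val_zero, Matrix.cons_val_one, Matrix.head_cons,
        Matrix.cons_val_two, Matrix.tail_cons]
    · rw [hkey]
      simp
    · exact sub_add_cancel _ _
  · have hn : ((Complex.normSq (z 1) : ℝ) : ℂ) ≠ 0 :=
      Complex.ofReal_ne_zero.mpr (by simpa [Complex.normSq_eq_zero] using hz)
    have hkey : conj (z 1) * (-(s:ℂ) * z 1 / ((Complex.normSq (z 1) : ℝ):ℂ)) = -(s:ℂ) := by
      rw [mul_div_assoc', div_eq_iff hn]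
      linear_combination -(s:ℂ) * Complex.mul_conj (z 1)
    refine ⟨![0, -(s:ℂ) * z 1 / ((Complex.normSq (z 1) : ℝ):ℂ),
      w - ((conj (0:ℂ) * conj (z 1)
          + conj (z 0) * conj (-(s:ℂ) * z 1 / ((Complex.normSq (z 1) : ℝ):ℂ))) * (‖z 1‖ : ℂ)^2
        - conj (z 0) * conj (z 1)
          * (((conj (z 1) * (-(s:ℂ) * z 1 / ((Complex.normSq (z 1) : ℝ):ℂ))).re : ℝ) : ℂ))
          / (‖z 1‖ : ℂ)^3], ?_⟩
    rw [LD_apply]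
    refine Prod.ext ?_ ?_ <;>
      simp only [Matrix.cons_val_zero, Matrix.cons_val_one, Matrix.head_cons,
        Matrix.cons_val_two, Matrix.tail_cons]
    · rw [hkey]
      simp
    · exact sub_add_cancel _ _

lemma sl_w0 (z0 z1 p0 p1 p2 q0 q1 q2 : ℂ) (r : ℝ) (hrne : (r:ℂ) ≠ 0)
    (hkey : z0 * conj z0 = (r:ℂ) * (r:ℂ))
    (hp1 : conj z0 * p0 + z0 * conj p0 - conj z1 * p1 - z1 * conj p1 = 0)
    (hq1 : conj z0 * q0 + z0 * conj q0 - conj z1 * q1 - z1 * conj q1 = 0)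
    (hp2 : 2*(r:ℂ)^3*p2 - (-2*(r:ℂ)^2*(conj p0 * conj z1 + conj z0 * conj p1)
      + conj z0 * conj z1 * (conj z0 * p0 + z0 * conj p0)) = 0)
    (hp2c : 2*(r:ℂ)^3*conj p2 - (-2*(r:ℂ)^2*(p0 * z1 + z0 * p1)
      + z0 * z1 * (conj z0 * p0 + z0 * conj p0)) = 0)
    (hq2 : 2*(r:ℂ)^3*q2 - (-2*(r:ℂ)^2*(conj q0 * conj z1 + conj z0 * conj q1)
      + conj z0 * conj z1 * (conj z0 * q0 + z0 * conj q0)) = 0)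
    (hq2c : 2*(r:ℂ)^3*conj q2 - (-2*(r:ℂ)^2*(q0 * z1 + z0 * q1)
      + z0 * z1 * (conj z0 * q0 + z0 * conj q0)) = 0) :
    (conj p0 * q0 + conj p1 * q1 + conj p2 * q2).im = 0 := by
  rw [← Complex.conj_eq_iff_im]
  simp only [map_add, map_mul, Complex.conj_conj]
  apply mul_left_cancel₀ (a := 4*(r:ℂ)^6)
    (mul_ne_zero (by norm_num) (pow_ne_zero 6 hrne))
  linear_combination ((4:ℂ)*(r:ℂ)^4*(conj p1)*q1 + (-4:ℂ)*(r:ℂ)^4*p1*(conj q1) + (4:ℂ)*(r:ℂ)^4*(conj p0)*q0 + (-4:ℂ)*(r:ℂ)^4*p0*(conj q0) + (-4:ℂ)*z1*(conj z1)*(r:ℂ)^2*(conj p1)*q1 + (4:ℂ)*z1*(conj z1)*(r:ℂ)^2*p1*(conj q1) + (-4:ℂ)*z1*(conj z1)*(r:ℂ)^2*(conj p0)*q0 + (4:ℂ)*z1*(conj z1)*(r:ℂ)^2*p0*(conj q0)) * hkey + ((-4:ℂ)*z1*(r:ℂ)^4*(conj q1) + (4:ℂ)*z0*(r:ℂ)^4*(conj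 q0) + (-2:ℂ)*z0*(conj z0)*(conj z1)*(r:ℂ)^2*q1 + (2:ℂ)*z0*(conj z0)*z1*(r:ℂ)^2*(conj q1)) * hp1 + ((2:ℂ)*(r:ℂ)^3*(conj q2)) * hp2 + ((-2:ℂ)*(r:ℂ)^3*q2) * hp2c + ((4:ℂ)*z1*(r:ℂ)^4*(conj p1) + (-4:ℂ)*z0*(r:ℂ)^4*(conj p0) + (2:ℂ)*z0*(conj z0)*(conj z1)*(r:ℂ)^2*p1 + (-2:ℂ)*z0*(conj z0)*z1*(r:ℂ)^2*(conj p1)) * hq1 + ((2:ℂ)*z1*(r:ℂ)^2*p0 + (2:ℂ)*z0*(r:ℂ)^2*p1 + (-1:ℂ)*z0*(conj z0)*z1*p0 + (-1:ℂ)*z0^2*z1*(conj p0)) * hq2 + ((-2:ℂ)*(conj z1)*(r:ℂ)^2*(conj p0) + (-2:ℂ)*(conj z0)*(r:ℂ)^2*(conj p1) + (conj z0)^2*(conj z1)*p0 + z0*(conj z0)*(conj z1)*(conj p0)) * hq2c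

lemma sl_w1 (z0 z1 p0 p1 p2 q0 q1 q2 : ℂ) (r : ℝ) (hrne : (r:ℂ) ≠ 0)
    (hkey : z1 * conj z1 = (r:ℂ) * (r:ℂ))
    (hp1 : conj z0 * p0 + z0 * conj p0 - conj z1 * p1 - z1 * conj p1 = 0)
    (hq1 : conj z0 * q0 + z0 * conj q0 - conj z1 * q1 - z1 * conj q1 = 0)
    (hp2 : 2*(r:ℂ)^3*p2 - (-2*(r:ℂ)^2*(conj p0 * conj z1 + conj z0 * conj p1)
      + conj z0 * conj z1 * (conj z1 * p1 + z1 * conj p1)) = 0)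
    (hp2c : 2*(r:ℂ)^3*conj p2 - (-2*(r:ℂ)^2*(p0 * z1 + z0 * p1)
      + z0 * z1 * (conj z1 * p1 + z1 * conj p1)) = 0)
    (hq2 : 2*(r:ℂ)^3*q2 - (-2*(r:ℂ)^2*(conj q0 * conj z1 + conj z0 * conj q1)
      + conj z0 * conj z1 * (conj z1 * q1 + z1 * conj q1)) = 0)
    (hq2c : 2*(r:ℂ)^3*conj q2 - (-2*(r:ℂ)^2*(q0 * z1 + z0 * q1)
      + z0 * z1 * (conj z1 * q1 + z1 * conj q1)) = 0) :
    (conj p0 * q0 + conj p1 * q1 + conj p2 * q2).im = 0 := by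
  rw [← Complex.conj_eq_iff_im]
  simp only [map_add, map_mul, Complex.conj_conj]
  apply mul_left_cancel₀ (a := 4*(r:ℂ)^6)
    (mul_ne_zero (by norm_num) (pow_ne_zero 6 hrne))
  linear_combination ((4:ℂ)*(r:ℂ)^4*(conj p1)*q1 + (-4:ℂ)*(r:ℂ)^4*p1*(conj q1) + (4:ℂ)*(r:ℂ)^4*(conj p0)*q0 + (-4:ℂ)*(r:ℂ)^4*p0*(conj q0) + (4:ℂ)*z0*(conj z1)*(r:ℂ)^2*p1*(conj q0) + (-4:ℂ)*z0*(conj z1)*(r:ℂ)^2*(conj p0)*q1 + (4:ℂ)*z0*z1*(r:ℂ)^2*(conj p1)*(conj q0) + (-4:ℂ)*z0*z1*(r:ℂ)^2*(conj p0)*(conj q1) + (-4:ℂ)*z0*(conj z0)*(r:ℂ)^2*(conj p1)*q1 + (4:ℂ)*z0*(conj z0)*(r:ℂ)^2*p1*(conj q1)) * hkey + ((-4:ℂ)*z1*(r:ℂ)^4*(conj q1) + (2:ℂ)*z1*(conj z1)^2*(r:ℂ)^2*q1 + (2:ℂ)*z1^2*(conj z1)*(r:ℂ)^2*(conj q1))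 * hp1 + ((2:ℂ)*(r:ℂ)^3*(conj q2)) * hp2 + ((-2:ℂ)*(r:ℂ)^3*q2) * hp2c + ((4:ℂ)*z1*(r:ℂ)^4*(conj p1) + (-2:ℂ)*z1*(conj z1)^2*(r:ℂ)^2*p1 + (-2:ℂ)*z1^2*(conj z1)*(r:ℂ)^2*(conj p1)) * hq1 + ((2:ℂ)*z1*(r:ℂ)^2*p0 + (2:ℂ)*z0*(r:ℂ)^2*p1 + (-1:ℂ)*z0*z1*(conj z1)*p1 + (-1:ℂ)*z0*z1^2*(conj p1)) * hq2 + ((-2:ℂ)*(conj z1)*(r:ℂ)^2*(conj p0) + (-2:ℂ)*(conj z0)*(r:ℂ)^2*(conj p1) + (conj z0)*(conj z1)^2*p1 + (conj z0)*z1*(conj z1)*(conj p1)) * hq2c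

lemma sl_o0 (z0 z1 p0 p1 p2 q0 q1 q2 s0 s1 s2 : ℂ) (r : ℝ) (hrne : (r:ℂ) ≠ 0)
    (hp1 : conj z0 * p0 + z0 * conj p0 - conj z1 * p1 - z1 * conj p1 = 0)
    (hq1 : conj z0 * q0 + z0 * conj q0 - conj z1 * q1 - z1 * conj q1 = 0)
    (hs1 : conj z0 * s0 + z0 * conj s0 - conj z1 * s1 - z1 * conj s1 = 0)
    (hp2 : 2*(r:ℂ)^3*p2 - (-2*(r:ℂ)^2*(conj p0 * conj z1 + conj z0 * conj p1)
      + conj z0 * conj z1 * (conj z0 * p0 + z0 * conj p0)) = 0)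
    (hp2c : 2*(r:ℂ)^3*conj p2 - (-2*(r:ℂ)^2*(p0 * z1 + z0 * p1)
      + z0 * z1 * (conj z0 * p0 + z0 * conj p0)) = 0)
    (hq2 : 2*(r:ℂ)^3*q2 - (-2*(r:ℂ)^2*(conj q0 * conj z1 + conj z0 * conj q1)
      + conj z0 * conj z1 * (conj z0 * q0 + z0 * conj q0)) = 0)
    (hq2c : 2*(r:ℂ)^3*conj q2 - (-2*(r:ℂ)^2*(q0 * z1 + z0 * q1)
      + z0 * z1 * (conj z0 * q0 + z0 * conj q0)) = 0)
    (hs2 : 2*(r:ℂ)^3*s2 - (-2*(r:ℂ)^2*(conj s0 * conj z1 + conj z0 * conj s1)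
      + conj z0 * conj z1 * (conj z0 * s0 + z0 * conj s0)) = 0)
    (hs2c : 2*(r:ℂ)^3*conj s2 - (-2*(r:ℂ)^2*(s0 * z1 + z0 * s1)
      + z0 * z1 * (conj z0 * s0 + z0 * conj s0)) = 0) :
    (p0*q1*s2 - p0*q2*s1 - q0*p1*s2 + q0*p2*s1 + s0*p1*q2 - s0*p2*q1).im = 0 := by
  rw [← Complex.conj_eq_iff_im]
  simp only [map_add, map_sub, map_mul, Complex.conj_conj]
  apply mul_left_cancel₀ (a := 2*(r:ℂ)^3)
    (mul_ne_zero (by norm_num) (pow_ne_zero 3 hrne))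
  linear_combination ((-2:ℂ)*(r:ℂ)^2*(conj q1)*s1 + (2:ℂ)*(r:ℂ)^2*q1*(conj s1) + (-2:ℂ)*(r:ℂ)^2*(conj q0)*s0 + (2:ℂ)*(r:ℂ)^2*q0*(conj s0) + (-1:ℂ)*z0*(conj z1)*q1*(conj s0) + z0*(conj z1)*(conj q0)*s1 + (-1:ℂ)*z0*z1*(conj q1)*(conj s0) + z0*z1*(conj q0)*(conj s1)) * hp1 + (q1*s0 + (-1:ℂ)*q0*s1) * hp2 + ((-1:ℂ)*(conj q1)*(conj s0) + (conj q0)*(conj s1)) * hp2c + ((2:ℂ)*(r:ℂ)^2*(conj p1)*s1 + (-2:ℂ)*(r:ℂ)^2*p1*(conj s1) + (2:ℂ)*(r:ℂ)^2*(conj p0)*s0 + (-2:ℂ)*(r:ℂ)^2*p0*(conj s0) + z0*(conj z1)*p1*(conj s0) + (-1:ℂ)*z0*(conj z1)*(conj p0)*s1 + z0*z1*(conj p1)*(conj s0) + (-1:ℂ)*z0*z1*(conj p0)*(conj s1)) * hq1 + ((-1:ℂ)*p1*s0 + p0*s1) * hq2 + ((conj p1)*(conj s0) + (-1:ℂ)*(conj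 p0)*(conj s1)) * hq2c + ((-2:ℂ)*(r:ℂ)^2*(conj p1)*q1 + (2:ℂ)*(r:ℂ)^2*p1*(conj q1) + (-2:ℂ)*(r:ℂ)^2*(conj p0)*q0 + (2:ℂ)*(r:ℂ)^2*p0*(conj q0) + (-1:ℂ)*z0*(conj z1)*p1*(conj q0) + z0*(conj z1)*(conj p0)*q1 + (-1:ℂ)*z0*z1*(conj p1)*(conj q0) + z0*z1*(conj p0)*(conj q1)) * hs1 + (p1*q0 + (-1:ℂ)*p0*q1) * hs2 + ((-1:ℂ)*(conj p1)*(conj q0) + (conj p0)*(conj q1)) * hs2c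

lemma sl_o1 (z0 z1 p0 p1 p2 q0 q1 q2 s0 s1 s2 : ℂ) (r : ℝ) (hrne : (r:ℂ) ≠ 0)
    (hp1 : conj z0 * p0 + z0 * conj p0 - conj z1 * p1 - z1 * conj p1 = 0)
    (hq1 : conj z0 * q0 + z0 * conj q0 - conj z1 * q1 - z1 * conj q1 = 0)
    (hs1 : conj z0 * s0 + z0 * conj s0 - conj z1 * s1 - z1 * conj s1 = 0)
    (hp2 : 2*(r:ℂ)^3*p2 - (-2*(r:ℂ)^2*(conj p0 * conj z1 + conj z0 * conj p1)
      + conj z0 * conj z1 * (conj z1 * p1 + z1 * conj p1)) = 0)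
    (hp2c : 2*(r:ℂ)^3*conj p2 - (-2*(r:ℂ)^2*(p0 * z1 + z0 * p1)
      + z0 * z1 * (conj z1 * p1 + z1 * conj p1)) = 0)
    (hq2 : 2*(r:ℂ)^3*q2 - (-2*(r:ℂ)^2*(conj q0 * conj z1 + conj z0 * conj q1)
      + conj z0 * conj z1 * (conj z1 * q1 + z1 * conj q1)) = 0)
    (hq2c : 2*(r:ℂ)^3*conj q2 - (-2*(r:ℂ)^2*(q0 * z1 + z0 * q1)
      + z0 * z1 * (conj z1 * q1 + z1 * conj q1)) = 0)
    (hs2 : 2*(r:ℂ)^3*s2 - (-2*(r:ℂ)^2*(conj s0 * conj z1 + conj z0 * conj s1)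
      + conj z0 * conj z1 * (conj z1 * s1 + z1 * conj s1)) = 0)
    (hs2c : 2*(r:ℂ)^3*conj s2 - (-2*(r:ℂ)^2*(s0 * z1 + z0 * s1)
      + z0 * z1 * (conj z1 * s1 + z1 * conj s1)) = 0) :
    (p0*q1*s2 - p0*q2*s1 - q0*p1*s2 + q0*p2*s1 + s0*p1*q2 - s0*p2*q1).im = 0 := by
  rw [← Complex.conj_eq_iff_im]
  simp only [map_add, map_sub, map_mul, Complex.conj_conj]
  apply mul_left_cancel₀ (a := 2*(r:ℂ)^3)
    (mul_ne_zero (by norm_num) (pow_ne_zero 3 hrne))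
  linear_combination ((-2:ℂ)*(r:ℂ)^2*(conj q1)*s1 + (2:ℂ)*(r:ℂ)^2*q1*(conj s1) + (-2:ℂ)*(r:ℂ)^2*(conj q0)*s0 + (2:ℂ)*(r:ℂ)^2*q0*(conj s0) + z1*(conj z1)*(conj q1)*s1 + (-1:ℂ)*z1*(conj z1)*q1*(conj s1)) * hp1 + (q1*s0 + (-1:ℂ)*q0*s1) * hp2 + ((-1:ℂ)*(conj q1)*(conj s0) + (conj q0)*(conj s1)) * hp2c + ((2:ℂ)*(r:ℂ)^2*(conj p1)*s1 + (-2:ℂ)*(r:ℂ)^2*p1*(conj s1) + (2:ℂ)*(r:ℂ)^2*(conj p0)*s0 + (-2:ℂ)*(r:ℂ)^2*p0*(conj s0) + (-1:ℂ)*z1*(conj z1)*(conj p1)*s1 + z1*(conj z1)*p1*(conj s1)) * hq1 + ((-1:ℂ)*p1*s0 + p0*s1) * hq2 + ((conj p1)*(conj s0) + (-1:ℂ)*(conj p0)*(conj s1)) * hq2c + ((-2:ℂ)*(r:ℂ)^2*(conj p1)*q1 + (2:ℂ)*(r:ℂ)^2*p1*(conj q1) + (-2:ℂ)*(r:ℂ)^2*(conj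 p0)*q0 + (2:ℂ)*(r:ℂ)^2*p0*(conj q0) + z1*(conj z1)*(conj p1)*q1 + (-1:ℂ)*z1*(conj z1)*p1*(conj q1)) * hs1 + (p1*q0 + (-1:ℂ)*p0*q1) * hs2 + ((-1:ℂ)*(conj p1)*(conj q0) + (conj p0)*(conj q1)) * hs2c

end Aux

/-- `F` is well-defined, continuous and surjective; and at every `z` with
`|z₁| ≠ |z₂|`, `F` is differentiable with surjective real derivative whose
`3`-dimensional kernel is a special Lagrangian `3`-plane.  Hence `F` is a
piecewise-smooth special Lagrangian fibration of `ℂ³` whose fibres over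
`(a,b)` with `a ≠ 0` are nonsingular SL `3`-folds. -/
theorem stmt17 :
    Continuous F17 ∧ Function.Surjective F17 ∧
    (∀ z : Fin 3 → ℂ, ‖z 0‖ ≠ ‖z 1‖ →
      DifferentiableAt ℝ F17 z ∧
      Function.Surjective (fderiv ℝ F17 z) ∧
      Module.finrank ℝ (LinearMap.ker (fderiv ℝ F17 z : (Fin 3 → ℂ) →ₗ[ℝ] ℝ × ℂ)) = 3 ∧
      (∀ p ∈ LinearMap.ker (fderiv ℝ F17 z : (Fin 3 → ℂ) →ₗ[ℝ] ℝ × ℂ),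
        ∀ q ∈ LinearMap.ker (fderiv ℝ F17 z : (Fin 3 → ℂ) →ₗ[ℝ] ℝ × ℂ), wC p q = 0) ∧
      (∀ p ∈ LinearMap.ker (fderiv ℝ F17 z : (Fin 3 → ℂ) →ₗ[ℝ] ℝ × ℂ),
        ∀ q ∈ LinearMap.ker (fderiv ℝ F17 z : (Fin 3 → ℂ) →ₗ[ℝ] ℝ × ℂ),
        ∀ r ∈ LinearMap.ker (fderiv ℝ F17 z : (Fin 3 → ℂ) →ₗ[ℝ] ℝ × ℂ), (OmC ![p, q, r]).im = 0)) := by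
  classical
  refine ⟨continuous_F17, surjective_F17, ?_⟩
  intro z hne
  have habs0 : 0 ≤ ‖z 0‖ := norm_nonneg _
  have habs1 : 0 ≤ ‖z 1‖ := norm_nonneg _
  -- In both cases we produce a `c` and the eventual equality
  obtain ⟨c, hc01, hz, hev⟩ :
      ∃ c : Fin 3, (c = 0 ∨ c = 1) ∧ z c ≠ 0 ∧
        F17 =ᶠ[nhds z]
          (fun w => (aval w, w 2 + conj (w 0) * conj (w 1) / (‖w c‖ : ℂ))) := by
    rcases hne.lt_or_gt with hlt | hlt
    · -- |z 0| < |z 1| : the region `a < 0`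
      refine ⟨1, Or.inr rfl, fun h => by simp [h] at hlt; exact absurd hlt (not_lt.mpr habs0), ?_⟩
      have hU : IsOpen {w : Fin 3 → ℂ | ‖w 0‖ < ‖w 1‖} :=
        isOpen_lt (continuous_norm.comp (continuous_apply 0))
          (continuous_norm.comp (continuous_apply 1))
      filter_upwards [hU.mem_nhds hlt] with w hw
      have hns : Complex.normSq (w 0) < Complex.normSq (w 1) := by
        rw [← Complex.sq_norm, ← Complex.sq_norm]
        exact pow_lt_pow_left₀ hw (norm_nonneg _) (by norm_num)
      have hav : aval w < 0 := by
        unfold aval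
        linarith
      unfold F17
      rw [if_neg (by rintro ⟨h0, -, -⟩; exact hav.ne h0),
        if_neg (by rintro ⟨h0, -⟩; exact absurd h0 (not_le.mpr hav))]
    · -- |z 1| < |z 0| : the region `a > 0`
      refine ⟨0, Or.inl rfl, fun h => by simp [h] at hlt; exact absurd hlt (not_lt.mpr habs1), ?_⟩
      have hU : IsOpen {w : Fin 3 → ℂ | ‖w 1‖ < ‖w 0‖} :=
        isOpen_lt (continuous_norm.comp (continuous_apply 1))
          (continuous_norm.comp (continuous_apply 0))
      filter_upwards [hU.mem_nhds hlt] with w hw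
      have hns : Complex.normSq (w 1) < Complex.normSq (w 0) := by
        rw [← Complex.sq_norm, ← Complex.sq_norm]
        exact pow_lt_pow_left₀ hw (norm_nonneg _) (by norm_num)
      have hav : 0 < aval w := by
        unfold aval
        linarith
      have hw0 : w 0 ≠ 0 := by
        intro h
        rw [h] at hw
        simp at hw
        exact absurd hw (not_lt.mpr (norm_nonneg _))
      unfold F17
      rw [if_neg (by rintro ⟨h0, -, -⟩; exact hav.ne' h0), if_pos ⟨hav.le, hw0⟩]
  have hF : HasFDerivAt F17 (LinearMap.toContinuousLinearMap (LD c z)) z :=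
    (hasFDerivAt_LD c z hz).congr_of_eventuallyEq hev
  have hd : fderiv ℝ F17 z = LinearMap.toContinuousLinearMap (LD c z) := hF.fderiv
  have hker : LinearMap.ker (fderiv ℝ F17 z : (Fin 3 → ℂ) →ₗ[ℝ] ℝ × ℂ) = LinearMap.ker (LD c z) := by
    rw [hd]
    ext x
    simp [LinearMap.mem_ker, LinearMap.coe_toContinuousLinearMap']
  have hsurjLD := LD_surj c hc01 z hz
  have hrneC : ((‖z c‖ : ℝ) : ℂ) ≠ 0 :=
    Complex.ofReal_ne_zero.mpr (by simpa using hz)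
  have hkeyC : z c * conj (z c) = ((‖z c‖ : ℝ):ℂ) * ((‖z c‖ : ℝ):ℂ) := by
    rw [Complex.mul_conj, Complex.normSq_eq_norm_sq]
    push_cast
    ring
  refine ⟨hF.differentiableAt, ?_, ?_, ?_, ?_⟩
  · rw [hd]
    rw [show ⇑(LinearMap.toContinuousLinearMap (LD c z)) = ⇑(LD c z) from
      LinearMap.coe_toContinuousLinearMap' _]
    exact hsurjLD
  · rw [hker]
    have h1 := LinearMap.finrank_range_add_finrank_ker (LD c z)
    rw [LinearMap.range_eq_top.mpr hsurjLD, finrank_top] at h1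
    have hdom : Module.finrank ℝ (Fin 3 → ℂ) = 6 := by
      rw [Module.finrank_pi_fintype]
      simp [Complex.finrank_real_complex]
    have hcod : Module.finrank ℝ (ℝ × ℂ) = 3 := by
      rw [Module.finrank_prod, Complex.finrank_real_complex]
      simp
    rw [hdom, hcod] at h1
    omega
  · intro p hp q hq
    rw [hker, LinearMap.mem_ker] at hp hq
    obtain ⟨hp1, hp2, hp2c⟩ := comps c hc01 z hz p hp
    obtain ⟨hq1, hq2, hq2c⟩ := comps c hc01 z hz q hq
    have hwc : wC p q = (conj (p 0) * q 0 + conj (p 1) * q 1 + conj (p 2) * q 2).im := by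
      simp [wC, Fin.sum_univ_three]
    rw [hwc]
    rcases hc01 with h | h <;> subst h
    · exact sl_w0 (z 0) (z 1) (p 0) (p 1) (p 2) (q 0) (q 1) (q 2) (‖z 0‖)
        hrneC hkeyC hp1 hq1 hp2 hp2c hq2 hq2c
    · exact sl_w1 (z 0) (z 1) (p 0) (p 1) (p 2) (q 0) (q 1) (q 2) (‖z 1‖)
        hrneC hkeyC hp1 hq1 hp2 hp2c hq2 hq2c
  · intro p hp q hq s hs
    rw [hker, LinearMap.mem_ker] at hp hq hs
    obtain ⟨hp1, hp2, hp2c⟩ := comps c hc01 z hz p hp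
    obtain ⟨hq1, hq2, hq2c⟩ := comps c hc01 z hz q hq
    obtain ⟨hs1, hs2, hs2c⟩ := comps c hc01 z hz s hs
    have hOm : OmC ![p, q, s] = p 0 * q 1 * s 2 - p 0 * q 2 * s 1 - q 0 * p 1 * s 2
        + q 0 * p 2 * s 1 + s 0 * p 1 * q 2 - s 0 * p 2 * q 1 := by
      simp only [OmC, Matrix.det_fin_three, Matrix.of_apply, Matrix.cons_val', Matrix.cons_val_zero,
        Matrix.cons_val_one, Matrix.head_cons, Matrix.empty_val', Matrix.cons_val_fin_one,
        Matrix.cons_val_two, Matrix.tail_cons, Matrix.head_fin_const]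
      ring
    rw [hOm]
    rcases hc01 with h | h <;> subst h
    · exact sl_o0 (z 0) (z 1) (p 0) (p 1) (p 2) (q 0) (q 1) (q 2) (s 0) (s 1) (s 2)
        (‖z 0‖) hrneC hp1 hq1 hs1 hp2 hp2c hq2 hq2c hs2 hs2c
    · exact sl_o1 (z 0) (z 1) (p 0) (p 1) (p 2) (q 0) (q 1) (q 2) (s 0) (s 1) (s 2)
        (‖z 1‖) hrneC hp1 hq1 hs1 hp2 hp2c hq2 hq2c hs2 hs2c
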